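/- For every x ∈ [N], the expected number of active locations for a uniformly random permutation satisfies (1/N!) ∑_{π ∈ S_N} |A(π,x)| ≤ 1 + ln N − ln x. -/

import Mathlib

/-!
Write `π = Phi t` with `t` ranging over the `N!` tuples `t_k ∈ [k]`; `Phi` is a bijection because
`(π_{>k})⁻¹ π` sends `k` to `t_k` and `π_{>k}` only involves the `t_j` with `j > k`, so `t` is
recovered from the top down. The factor `π_{<k}` only involves the `t_j` with `j < k`; it fixes
every point `≥ k`, hence maps the points `< k` below `k`. So `y = π_{<k}(x)` does not depend on
`t_k`, and `k` is active exactly when `y ∈ {k, t_k}`: never for `k < x` (then `y = x > k`), always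
for `k = x`, and for exactly one of the `k` values of `t_k` when `k > x` (then `y < k`).
The expectation is therefore `1 + ∑_{x < k ≤ N} 1/k ≤ 1 + ln N − ln x`.
-/

/-- Embedding of `Fin (k+1)` into `Fin N` (where `k : Fin N`). -/
def emb {N : ℕ} (k : Fin N) (t : Fin (k.val + 1)) : Fin N :=
  ⟨t.val, lt_of_lt_of_le t.isLt k.isLt⟩

/-- `Phi t = (N t_N)(N−1 t_{N−1})⋯(2 t_2)(1 t_1)`, the strictly monotone factorization map. -/
def Phi {N : ℕ} (t : ∀ k : Fin N, Fin (k.val + 1)) : Equiv.Perm (Fin N) :=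
  ((List.finRange N).reverse.map fun k => Equiv.swap k (emb k (t k))).prod

instance {N : ℕ} : Nonempty (∀ k : Fin N, Fin (k.val + 1)) := ⟨fun _ => 0⟩

/-- `tof π` is the tuple `(t_1(π),…,t_N(π))` of the strictly monotone factorization of `π`. -/
noncomputable def tof {N : ℕ} (π : Equiv.Perm (Fin N)) : ∀ k : Fin N, Fin (k.val + 1) :=
  Function.invFun Phi π

/-- `phead π k` is `π_{<k} = (k−1 t_{k−1})⋯(1 t_1)`. -/
noncomputable def phead {N : ℕ} (π : Equiv.Perm (Fin N)) (k : Fin N) : Equiv.Perm (Fin N) :=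
  (((List.finRange N).reverse.filter fun j => decide (j < k)).map
    fun j => Equiv.swap j (emb j (tof π j))).prod

/-- `A(π,x)`: the set of active locations, i.e. `k` with `π_{<k}(x) ∈ {k, t_k(π)}`. -/
noncomputable def activeSet {N : ℕ} (π : Equiv.Perm (Fin N)) (x : Fin N) : Finset (Fin N) :=
  Finset.univ.filter fun k => phead π k x = k ∨ phead π k x = emb k (tof π k)

open Finset

theorem List.Pairwise.eq_filter_append_cons_filter {α : Type*} [LinearOrder α] {l : List α}
    (hl : l.Pairwise (· > ·)) {k : α} (hk : k ∈ l) :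
    l = l.filter (k < ·) ++ k :: l.filter (· < k) := by
  induction l with
  | nil => simp at hk
  | cons a l ih =>
    rw [List.pairwise_cons] at hl
    rcases List.mem_cons.1 hk with rfl | hk
    · have hgt : l.filter (k < ·) = [] :=
        List.filter_eq_nil_iff.2 fun b hb => by simpa using (hl.1 b hb).le
      have hlt : l.filter (· < k) = l := List.filter_eq_self.2 fun b hb => by simpa using hl.1 b hb
      simp [hgt, hlt]
    · have hka : k < a := hl.1 k hk
      simp [hka, hka.not_gt, ← ih hl.2 hk]

theorem sum_Ico_one_div_succ_le_log_sub {a b : ℕ} (ha : 0 < a) (hab : a ≤ b) :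
    ∑ i ∈ Ico a b, (1 : ℝ) / (i + 1) ≤ Real.log b - Real.log a := by
  calc ∑ i ∈ Ico a b, (1 : ℝ) / (i + 1)
      ≤ ∑ i ∈ Ico a b, (Real.log ↑(i + 1) - Real.log i) := by
        refine sum_le_sum fun i hi => ?_
        have hi : (0 : ℝ) < i := by have := (mem_Ico.1 hi).1; exact_mod_cast ha.trans_le this
        have := Real.log_le_sub_one_of_pos (show (0 : ℝ) < i / (i + 1) by positivity)
        rw [Real.log_div hi.ne' (by positivity)] at this
        have hsub : (i : ℝ) / (i + 1) - 1 = -(1 / (i + 1)) := by field_simp; ring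
        push_cast
        linarith
    _ = Real.log b - Real.log a := sum_Ico_sub (fun i => Real.log i) hab

theorem card_filter_mul_card_of_card_filter_update {ι : Type*} [Fintype ι] [DecidableEq ι]
    {β : ι → Type*} [∀ i, Fintype (β i)] (P : (∀ i, β i) → Prop) [DecidablePred P] (k : ι)
    {c : ℕ} (h : ∀ t, #{a : β k | P (Function.update t k a)} = c) :
    #{t | P t} * Fintype.card (β k) = c * Fintype.card (∀ i, β i) := by
  rcases isEmpty_or_nonempty (β k) with hk | ⟨⟨a₀⟩⟩
  · simp only [Fintype.card_eq_zero, mul_zero, Fintype.card_pi]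
    rw [prod_eq_zero (mem_univ k) Fintype.card_eq_zero, mul_zero]
  let e := Equiv.piSplitAt k β
  have hfiber r : #{a : β k | P (e.symm (a, r))} = c := by
    convert h (e.symm (a₀, r)) using 5 with a
    funext j
    by_cases hj : j = k
    · subst hj; simp [e]
    · simp [e, hj]
  have hcount : #{t | P t} = c * Fintype.card (∀ j : {j // j ≠ k}, β j) := by
    rw [card_filter, ← e.symm.sum_comp, Fintype.sum_prod_type_right]
    simp only [← card_filter, hfiber, sum_const, card_univ, smul_eq_mul]
    ring
  rw [hcount, Fintype.card_congr e, Fintype.card_prod]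
  ring

section

variable {N : ℕ}

/-- For `π = Phi t`, `swapProd t (· < k)` is `π_{<k}` and `swapProd t (k < ·)` is `π_{>k}`. -/
def swapProd (t : ∀ k : Fin N, Fin (k.val + 1)) (p : Fin N → Bool) : Equiv.Perm (Fin N) :=
  (((List.finRange N).reverse.filter p).map fun j => Equiv.swap j (emb j (t j))).prod

theorem swapProd_congr {t t' : ∀ k : Fin N, Fin (k.val + 1)} {p : Fin N → Bool}
    (h : ∀ j, p j → t j = t' j) : swapProd t p = swapProd t' p := by
  unfold swapProd
  congr 1
  exact List.map_congr_left fun j hj => by rw [h j (List.mem_filter.1 hj).2]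

theorem Phi_eq_mul_swap_mul (t : ∀ k : Fin N, Fin (k.val + 1)) (k : Fin N) :
    Phi t = swapProd t (k < ·) * Equiv.swap k (emb k (t k)) * swapProd t (· < k) := by
  have hdec : (List.finRange N).reverse.Pairwise (· > ·) :=
    List.pairwise_reverse.2 (List.pairwise_lt_finRange N)
  have hsplit := hdec.eq_filter_append_cons_filter (List.mem_reverse.2 (List.mem_finRange k))
  rw [Phi, hsplit, List.map_append, List.prod_append, List.map_cons, List.prod_cons, mul_assoc]
  rfl

theorem swapProd_lt_apply_of_le (t : ∀ k : Fin N, Fin (k.val + 1)) {k c : Fin N} (hc : k ≤ c) :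
    swapProd t (· < k) c = c := by
  refine (MulAction.mem_stabilizer_iff (G := Equiv.Perm (Fin N))).1 (list_prod_mem ?_)
  simp only [List.mem_map, List.mem_filter, decide_eq_true_eq]
  rintro _ ⟨j, ⟨-, hj⟩, rfl⟩
  have hjt : (emb j (t j)).val ≤ j.val := Nat.lt_succ_iff.1 (t j).isLt
  exact Equiv.swap_apply_of_ne_of_ne (by rintro rfl; exact hj.not_ge hc)
    (fun h => by rw [h] at hc; exact absurd (Fin.le_def.1 hc) (by omega))

theorem swapProd_lt_apply_lt (t : ∀ k : Fin N, Fin (k.val + 1)) {k c : Fin N} (hc : c < k) :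
    swapProd t (· < k) c < k := by
  by_contra! h
  have := swapProd_lt_apply_of_le t h
  exact hc.not_ge ((swapProd t (· < k)).injective this ▸ h)

theorem Phi_injective : Function.Injective (Phi (N := N)) := by
  intro t t' h
  funext k
  induction k using WellFoundedGT.induction with
  | _ k ih =>
    have hup : swapProd t (k < ·) = swapProd t' (k < ·) :=
      swapProd_congr fun j hj => ih j (by simpa using hj)
    have key (s : ∀ k : Fin N, Fin (k.val + 1)) :
        ((swapProd s (k < ·))⁻¹ * Phi s) k = emb k (s k) := by
      rw [Phi_eq_mul_swap_mul s k, ← mul_assoc, ← mul_assoc, inv_mul_cancel, one_mul,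
        Equiv.Perm.mul_apply, swapProd_lt_apply_of_le s le_rfl, Equiv.swap_apply_left]
    have hemb : (emb k (t k)).val = (emb k (t' k)).val :=
      congrArg Fin.val ((key t).symm.trans (h ▸ hup ▸ key t'))
    exact Fin.ext hemb

theorem card_pi_fin_succ_eq_factorial :
    Fintype.card (∀ k : Fin N, Fin (k.val + 1)) = N.factorial := by
  simp only [Fintype.card_pi, Fintype.card_fin]
  rw [Fin.prod_univ_eq_prod_range (· + 1) N, prod_range_add_one_eq_factorial]

theorem Phi_bijective : Function.Bijective (Phi (N := N)) :=
  (Fintype.bijective_iff_injective_and_card _).2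
    ⟨Phi_injective, by rw [card_pi_fin_succ_eq_factorial, Fintype.card_perm, Fintype.card_fin]⟩

theorem tof_Phi (t : ∀ k : Fin N, Fin (k.val + 1)) : tof (Phi t) = t :=
  Function.leftInverse_invFun Phi_injective t

theorem mem_activeSet_Phi {t : ∀ k : Fin N, Fin (k.val + 1)} {x k : Fin N} :
    k ∈ activeSet (Phi t) x ↔
      swapProd t (· < k) x = k ∨ swapProd t (· < k) x = emb k (t k) := by
  simp only [activeSet, mem_filter, mem_univ, true_and, phead, tof_Phi]
  rfl

/-- The number of values of `t_k` making `k` active for `(Phi t, x)`, whatever the other `t_j`. -/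
def activeChoices (x k : ℕ) : ℕ := if x < k then 1 else if x = k then k + 1 else 0

theorem card_filter_mem_activeSet_Phi_update (t : ∀ k : Fin N, Fin (k.val + 1)) (x k : Fin N) :
    #{a : Fin (k.val + 1) | k ∈ activeSet (Phi (Function.update t k a)) x} =
      activeChoices x k := by
  have hlow (a : Fin (k.val + 1)) :
      swapProd (Function.update t k a) (· < k) = swapProd t (· < k) :=
    swapProd_congr fun j hj => Function.update_of_ne (ne_of_lt (by simpa using hj)) _ _
  simp only [mem_activeSet_Phi, hlow, Function.update_self]
  unfold activeChoices
  rcases lt_trichotomy x k with hxk | rfl | hkx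
  · have hy := swapProd_lt_apply_lt t hxk
    rw [if_pos (Fin.lt_def.1 hxk), card_eq_one]
    refine ⟨⟨_, Nat.lt_succ_of_lt hy⟩, ?_⟩
    ext a
    simp [hy.ne, Fin.ext_iff, emb, eq_comm]
  · simp [swapProd_lt_apply_of_le t le_rfl]
  · have hy := swapProd_lt_apply_of_le t hkx.le
    rw [if_neg (by omega), if_neg (by omega), card_eq_zero, filter_eq_empty_iff]
    intro a _
    rw [hy]
    have := a.isLt
    simp only [not_or, Fin.ext_iff, emb]
    omega

theorem sum_activeChoices_div_le {x n : ℕ} (hx : x < n) :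
    ∑ k ∈ range n, (activeChoices x k : ℝ) / (k + 1) ≤ 1 + Real.log n - Real.log (x + 1) := by
  rw [← sum_range_add_sum_Ico _ hx]
  have hlow : ∑ k ∈ range (x + 1), (activeChoices x k : ℝ) / (k + 1) = 1 := by
    rw [sum_range_succ, sum_eq_zero fun k hk => ?_]
    · simp only [activeChoices, lt_irrefl, if_false, if_true]
      push_cast
      field_simp
      ring
    · have hk := mem_range.1 hk
      simp [activeChoices, hk.not_gt, hk.ne']
  have hhigh : ∑ k ∈ Ico (x + 1) n, (activeChoices x k : ℝ) / (k + 1) =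
      ∑ k ∈ Ico (x + 1) n, (1 : ℝ) / (k + 1) :=
    sum_congr rfl fun k hk => by
      simp [activeChoices, Nat.lt_of_succ_le (mem_Ico.1 hk).1]
  have hlog := sum_Ico_one_div_succ_le_log_sub (Nat.succ_pos x) hx
  push_cast at hlog
  linarith

end

theorem stmt7_general {N : ℕ} (x : Fin N) :
    (∑ π : Equiv.Perm (Fin N), ((activeSet π x).card : ℝ)) / (N.factorial : ℝ)
      ≤ 1 + Real.log N - Real.log ((x.val : ℝ) + 1) := by
  have hdouble : ∑ t, #(activeSet (Phi t) x) = ∑ k : Fin N, #{t | k ∈ activeSet (Phi t) x} := by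
    simpa [bipartiteAbove, bipartiteBelow] using
      sum_card_bipartiteAbove_eq_sum_card_bipartiteBelow (s := univ) (t := univ)
        (fun t k => k ∈ activeSet (Phi t) x)
  have hcount (k : Fin N) : (#{t | k ∈ activeSet (Phi t) x} : ℝ) / N.factorial =
      activeChoices x k / (k + 1) := by
    have := card_filter_mul_card_of_card_filter_update (fun t => k ∈ activeSet (Phi t) x) k
      (card_filter_mem_activeSet_Phi_update · x k)
    rw [Fintype.card_fin, card_pi_fin_succ_eq_factorial] at this
    rw [div_eq_div_iff (by positivity) (by positivity)]
    exact_mod_cast this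
  calc (∑ π, (#(activeSet π x) : ℝ)) / N.factorial
      = (∑ t, (#(activeSet (Phi t) x) : ℝ)) / N.factorial := by
        rw [← (Equiv.ofBijective _ Phi_bijective).sum_comp]; rfl
    _ = ∑ k : Fin N, (activeChoices x k : ℝ) / (k + 1) := by
        rw [← sum_congr rfl fun k _ => hcount k, ← sum_div]
        exact_mod_cast congrArg (fun n : ℕ => (n : ℝ) / N.factorial) hdouble
    _ ≤ _ := by
        rw [Fin.sum_univ_eq_sum_range (fun k => (activeChoices x k : ℝ) / (k + 1))]
        exact sum_activeChoices_div_le x.isLt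

/-- For every `x ∈ [N]`, the expected number of active locations for a
uniformly random permutation satisfies `(1/N!) ∑_π |A(π,x)| ≤ 1 + ln N − ln x`. -/
theorem stmt7 {N : ℕ} (hN : 1 ≤ N) (x : Fin N) :
    (∑ π : Equiv.Perm (Fin N), ((activeSet π x).card : ℝ)) / (N.factorial : ℝ)
      ≤ 1 + Real.log N - Real.log ((x.val : ℝ) + 1) :=
  stmt7_general x
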